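/- Let n ≥ 4 and assume the hypotheses (★) and (†). Suppose α, β, γ, β′, γ′ ∈ Φ satisfy α = β − γ = β′ − γ′, γ ≠ γ′, and γ − γ′ ∈ Φ. Then on U: (i) (γ − γ′)·(R^{α} − R^{−α}) = 0, and (ii) −γ·(R^{α} − R^{−α}) w_α − c^{α}_{β,−γ} z_α = −γ′·(R^{α} − R^{−α}) w_α − c^{α}_{β′,−γ′} z_α (i.e., the quantities A associated to the two root triangles sharing the edge α coincide). -/
import Mathlib


open scoped Classical

noncomputable section

/-- The `i`-th standard basis vector of `ℝ^n`. -/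
def stdE {n : ℕ} (i : Fin n) : Fin n → ℝ := fun k => if k = i then 1 else 0

/-- The set of roots of `gl_n`: `Φ = {e_i − e_j : i ≠ j}`. -/
def Phi (n : ℕ) : Set (Fin n → ℝ) :=
  {x | ∃ i j : Fin n, i ≠ j ∧ x = stdE i - stdE j}

/-- Euclidean dot product on `ℝ^n`. -/
def dotR {n : ℕ} (x y : Fin n → ℝ) : ℝ := ∑ k, x k * y k

/-- Structure constants of `gl_n`: for roots `α = e_a − e_b`, `γ = e_c − e_d` with
`α + γ ∈ Φ`, `cst α γ = δ_{bc} − δ_{da}` (the coefficient of `e_{α+γ}` in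
`[e_{ab}, e_{cd}] = δ_{bc} e_{ad} − δ_{da} e_{cb}`), and `cst α γ = 0` in every
other case (in particular when a subscript fails to be a root, so that terms
containing `cst` with a non-root subscript are absent). -/
def cst {n : ℕ} (α γ : Fin n → ℝ) : ℝ :=
  if α ∈ Phi n ∧ γ ∈ Phi n ∧ α + γ ∈ Phi n then
    (∑ k, max (-(α k)) 0 * max (γ k) 0) - (∑ k, max (α k) 0 * max (-(γ k)) 0)
  else 0

/-- Sum of a quantity over all roots `α ∈ Φ` (each root `e_i − e_j`, `i ≠ j`,
occurring exactly once). -/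
def sumPhi {n : ℕ} (f : (Fin n → ℝ) → ℂ) : ℂ :=
  ∑ p ∈ (Finset.univ : Finset (Fin n)).offDiag, f (stdE p.1 - stdE p.2)

/-- `z(x) = w″(x)/(2 w(x))`. -/
def zfun (w : ℝ → ℂ) (x : ℝ) : ℂ := deriv (deriv w) x / (2 * w x)

lemma stdE_sub_apply {n : ℕ} (i j k : Fin n) :
    (stdE i - stdE j) k = (if k = i then (1:ℝ) else 0) - (if k = j then 1 else 0) := by
  simp [stdE]

lemma mem_Phi {n : ℕ} {i j : Fin n} (h : i ≠ j) : stdE i - stdE j ∈ Phi n := ⟨i, j, h, rfl⟩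

lemma neg_mem_Phi {n : ℕ} {v : Fin n → ℝ} (h : v ∈ Phi n) : -v ∈ Phi n := by
  obtain ⟨i, j, hij, rfl⟩ := h
  exact ⟨j, i, hij.symm, by abel⟩

lemma val_one {n : ℕ} {i j k : Fin n} (h : (stdE i - stdE j) k = 1) : k = i := by
  rw [stdE_sub_apply] at h
  split_ifs at h <;> first | assumption | norm_num at h

lemma val_neg_one {n : ℕ} {i j k : Fin n} (h : (stdE i - stdE j) k = -1) : k = j := by
  rw [stdE_sub_apply] at h
  split_ifs at h <;> first | assumption | norm_num at h

lemma notMem_Phi {n : ℕ} {v : Fin n → ℝ} {k l : Fin n} (hkl : k ≠ l)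
    (hk : v k = 1) (hl : v l = 1) : v ∉ Phi n := by
  rintro ⟨i, j, hij, rfl⟩
  exact hkl ((val_one hk).trans (val_one hl).symm)

lemma root_eq {n : ℕ} {a b i j : Fin n} (hab : a ≠ b) (hij : i ≠ j)
    (h : (stdE a - stdE b : Fin n → ℝ) = stdE i - stdE j) : a = i ∧ b = j := by
  constructor
  · apply val_one (i := i) (j := j)
    rw [← h, stdE_sub_apply, if_pos rfl, if_neg hab]; norm_num
  · apply val_neg_one (i := i) (j := j)
    rw [← h, stdE_sub_apply, if_pos rfl, if_neg (Ne.symm hab)]; norm_num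

lemma sum_decomp {n : ℕ} {a b r s p q : Fin n} (hab : a ≠ b) (hrs : r ≠ s) (hpq : p ≠ q)
    (h : (stdE p - stdE q : Fin n → ℝ) = (stdE a - stdE b) + (stdE r - stdE s)) :
    (r = b ∧ p = a ∧ q = s ∧ s ≠ a ∧ s ≠ b) ∨ (s = a ∧ p = r ∧ q = b ∧ r ≠ a ∧ r ≠ b) := by
  by_cases hrb : r = b
  · subst hrb
    by_cases hsa : s = a
    · subst hsa
      exfalso
      have h0 : (stdE p - stdE q : Fin n → ℝ) = 0 := by rw [h]; abel
      have hp := congrFun h0 p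
      rw [stdE_sub_apply] at hp
      simp [hpq] at hp
    · left
      have h' : (stdE p - stdE q : Fin n → ℝ) = stdE a - stdE s := by rw [h]; abel
      obtain ⟨h5, h6⟩ := root_eq hpq (fun hh => hsa hh.symm) h'
      exact ⟨rfl, h5, h6, hsa, Ne.symm hrs⟩
  · by_cases hsa : s = a
    · subst hsa
      right
      have h' : (stdE p - stdE q : Fin n → ℝ) = stdE r - stdE b := by rw [h]; abel
      obtain ⟨h5, h6⟩ := root_eq hpq hrb h'
      exact ⟨rfl, h5, h6, hrs, hrb⟩
    · exfalso
      by_cases har : a = r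
      · have ha := congrFun h a
        rw [Pi.add_apply, stdE_sub_apply, stdE_sub_apply, stdE_sub_apply] at ha
        simp only [if_pos rfl, if_neg hab, if_pos har, if_neg (Ne.symm (show s ≠ a from hsa))] at ha
        split_ifs at ha <;> norm_num at ha
      · have ha : (stdE p - stdE q) a = 1 := by
          rw [congrFun h a, Pi.add_apply, stdE_sub_apply, stdE_sub_apply]
          simp [hab, har, Ne.symm (show s ≠ a from hsa)]
        have hpa := val_one ha
        by_cases hbs : b = s
        · have hb := congrFun h b
          rw [Pi.add_apply, stdE_sub_apply, stdE_sub_apply, stdE_sub_apply] at hb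
          simp only [if_pos rfl, if_neg (Ne.symm hab), if_neg (Ne.symm (show r ≠ b from hrb)),
            if_pos hbs] at hb
          split_ifs at hb <;> norm_num at hb
        · have hb : (stdE p - stdE q) b = -1 := by
            rw [congrFun h b, Pi.add_apply, stdE_sub_apply, stdE_sub_apply]
            simp [Ne.symm hab, Ne.symm (show r ≠ b from hrb), hbs]
          have hqb := val_neg_one hb
          subst hpa; subst hqb
          have h5 : (stdE r - stdE s : Fin n → ℝ) = 0 := by
            have := left_eq_add.mp h
            exact this
          have hr := congrFun h5 r
          rw [stdE_sub_apply] at hr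
          simp [hrs] at hr

lemma max_pos_stdE {n : ℕ} {i j : Fin n} (h : i ≠ j) (k : Fin n) :
    max ((stdE i - stdE j) k) 0 = stdE i k := by
  rw [stdE_sub_apply]; unfold stdE
  by_cases h1 : k = i
  · subst h1; rw [if_neg h]; norm_num
  · by_cases h2 : k = j <;> simp [h1, h2, Ne.symm h]

lemma max_neg_stdE {n : ℕ} {i j : Fin n} (h : i ≠ j) (k : Fin n) :
    max (-((stdE i - stdE j) k)) 0 = stdE j k := by
  have h0 : -((stdE i - stdE j) k) = (stdE j - stdE i) k := by
    simp [stdE_sub_apply]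
  rw [h0, max_pos_stdE h.symm]

lemma sum_stdE_mul {n : ℕ} (i j : Fin n) :
    ∑ k, stdE i k * stdE j k = if i = j then (1:ℝ) else 0 := by
  unfold stdE
  simp [ite_mul, Finset.sum_ite_eq', eq_comm]

lemma cst_eval {n : ℕ} {p q r s : Fin n} (hpq : p ≠ q) (hrs : r ≠ s)
    (hsum : (stdE p - stdE q) + (stdE r - stdE s) ∈ Phi n) :
    cst (stdE p - stdE q) (stdE r - stdE s)
      = (if q = r then (1:ℝ) else 0) - (if p = s then 1 else 0) := by
  unfold cst
  rw [if_pos ⟨mem_Phi hpq, mem_Phi hrs, hsum⟩]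
  have e1 : ∀ k, max (-((stdE p - stdE q) k)) 0 * max ((stdE r - stdE s) k) 0
      = stdE q k * stdE r k := fun k => by rw [max_neg_stdE hpq, max_pos_stdE hrs]
  have e2 : ∀ k, max ((stdE p - stdE q) k) 0 * max (-((stdE r - stdE s) k)) 0
      = stdE p k * stdE s k := fun k => by rw [max_pos_stdE hpq, max_neg_stdE hrs]
  simp_rw [e1, e2, sum_stdE_mul]


theorem statement6
    (n : ℕ) (hn : 4 ≤ n)
    (D : Set ℝ) (hDopen : IsOpen D) (hD0 : (0:ℝ) ∉ D) (hDsymm : ∀ x ∈ D, -x ∈ D)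
    (w : ℝ → ℂ) (hw : ContDiffOn ℝ 2 w D) (hwne : ∀ x ∈ D, w x ≠ 0)
    (hwodd : ∀ x ∈ D, w (-x) = -w x)
    (U : Set (Fin n → ℝ)) (hUne : U.Nonempty) (hUconv : Convex ℝ U)
    (hUopen : IsOpen U) (hUD : ∀ q ∈ U, ∀ α ∈ Phi n, dotR α q ∈ D)
    (hadd : ∀ x ∈ D, ∀ y ∈ D, x + y ∈ D →
      w x * deriv w y - w y * deriv w x = (zfun w x - zfun w y) * w (x + y))
    (RhR : Fin n → (Fin n → ℝ) → (Fin n → ℝ) → ℂ)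
    (Rsame Ropp : (Fin n → ℝ) → (Fin n → ℝ) → ℂ)
    (hstar1 : ∀ q ∈ U, ∀ α ∈ Phi n, Ropp α q + Ropp (-α) q = 0)
    (hstar2 : ∀ q ∈ U, ∀ α ∈ Phi n, Rsame α q + Rsame (-α) q = 0)
    (hstar3 : ∀ q ∈ U, ∀ α ∈ Phi n,
      Rsame α q + Ropp (-α) q = -(deriv w (dotR α q)) / w (dotR α q))
    (hdagger : ∀ q ∈ U, ∀ α ∈ Phi n, ∀ β ∈ Phi n, α ≠ β → α ≠ -β →
      (∑ i, (α i : ℂ) * (RhR i β q - RhR i (-β) q)) * w (dotR α q) =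
        (cst α (β - α) : ℂ) *
            (-(deriv w (dotR α q)) / w (dotR α q)
              - deriv w (dotR β q) / w (dotR β q) + 2 * Ropp α q) * w (dotR (β - α) q)
          - (cst (-α) (β + α) : ℂ) *
              (-(deriv w (dotR α q)) / w (dotR α q)
                + deriv w (dotR β q) / w (dotR β q) + 2 * Ropp α q) * w (dotR (β + α) q))
    (α β γ β' γ' : Fin n → ℝ)
    (hα : α ∈ Phi n) (hβ : β ∈ Phi n) (hγ : γ ∈ Phi n)
    (hβ' : β' ∈ Phi n) (hγ' : γ' ∈ Phi n)
    (h1 : α = β - γ) (h2 : α = β' - γ') (h3 : γ ≠ γ') (h4 : γ - γ' ∈ Phi n) :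
    ∀ q ∈ U,
      (∑ i, ((γ i - γ' i : ℝ) : ℂ) * (RhR i α q - RhR i (-α) q) = 0) ∧
      (-(∑ i, (γ i : ℂ) * (RhR i α q - RhR i (-α) q)) * w (dotR α q)
            - (cst β (-γ) : ℂ) * zfun w (dotR α q) =
        -(∑ i, (γ' i : ℂ) * (RhR i α q - RhR i (-α) q)) * w (dotR α q)
            - (cst β' (-γ') : ℂ) * zfun w (dotR α q)) := by
  obtain ⟨a, b, hab, rfl⟩ := hα
  obtain ⟨b1, b2, hb12, rfl⟩ := hβ
  obtain ⟨g1, g2, hg12, rfl⟩ := hγ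
  obtain ⟨c1, c2, hc12, rfl⟩ := hβ'
  obtain ⟨d1, d2, hd12, rfl⟩ := hγ'
  have hb' : (stdE b1 - stdE b2 : Fin n → ℝ) = (stdE a - stdE b) + (stdE g1 - stdE g2) :=
    sub_eq_iff_eq_add.mp h1.symm
  have hc' : (stdE c1 - stdE c2 : Fin n → ℝ) = (stdE a - stdE b) + (stdE d1 - stdE d2) :=
    sub_eq_iff_eq_add.mp h2.symm
  have main : ∀ δ, δ ∈ Phi n → δ ≠ stdE a - stdE b → δ ≠ -(stdE a - stdE b) →
      (stdE a - stdE b - δ ∉ Phi n) → (stdE a - stdE b + δ ∉ Phi n) →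
      ∀ q ∈ U, ∑ i, (δ i : ℂ) * (RhR i (stdE a - stdE b) q - RhR i (-(stdE a - stdE b)) q) = 0 := by
    intro δ hδ hne1 hne2 hnm hnp q hq
    have hd := hdagger q hq δ hδ (stdE a - stdE b) (mem_Phi hab) hne1 hne2
    have cz1 : cst δ (stdE a - stdE b - δ) = 0 := by
      unfold cst; rw [if_neg]; rintro ⟨-, hh, -⟩; exact hnm hh
    have cz2 : cst (-δ) (stdE a - stdE b + δ) = 0 := by
      unfold cst; rw [if_neg]; rintro ⟨-, hh, -⟩; exact hnp hh
    rw [cz1, cz2] at hd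
    simp only [Complex.ofReal_zero, zero_mul, sub_zero] at hd
    exact (mul_eq_zero.mp hd).resolve_right (hwne _ (hUD q hq δ hδ))
  rcases sum_decomp hab hg12 hb12 hb' with ⟨hgb, hba, hbs, hsa, hsb⟩ | ⟨hga, hbr, hbb, hra, hrb⟩
  · rcases sum_decomp hab hd12 hc12 hc' with ⟨hdb, hca, hcs, hta, htb⟩ | ⟨hda, hcr, hcb, hua, hub⟩
    · -- case I-I
      obtain rfl := hgb.symm; obtain rfl := hba.symm; obtain rfl := hbs.symm
      obtain rfl := hdb.symm; obtain rfl := hca.symm; obtain rfl := hcs.symm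
      have hgd : g2 ≠ d2 := fun hh => h3 (by rw [hh])
      have hne1 : (stdE d2 - stdE g2 : Fin n → ℝ) ≠ stdE a - stdE b :=
        fun hh => hta (root_eq (Ne.symm hgd) hab hh).1
      have hne2 : (stdE d2 - stdE g2 : Fin n → ℝ) ≠ -(stdE a - stdE b) := by
        rw [neg_sub]; exact fun hh => htb (root_eq (Ne.symm hgd) hab.symm hh).1
      have hnm : (stdE a - stdE b - (stdE d2 - stdE g2) : Fin n → ℝ) ∉ Phi n := by
        apply notMem_Phi (Ne.symm hsa)
        · simp [stdE, hab, Ne.symm hta, Ne.symm hsa]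
        · simp [stdE, hsa, hsb, hgd]
      have hnp : (stdE a - stdE b + (stdE d2 - stdE g2) : Fin n → ℝ) ∉ Phi n := by
        apply notMem_Phi (Ne.symm hta)
        · simp [stdE, hab, Ne.symm hta, Ne.symm hsa]
        · simp [stdE, hta, htb, Ne.symm hgd]
      have hcoef : ∀ i, ((stdE b - stdE g2) i - (stdE b - stdE d2) i : ℝ)
          = (stdE d2 - stdE g2) i := by
        intro i; simp only [stdE_sub_apply]; ring
      intro q hq
      have hm := main _ (mem_Phi (Ne.symm hgd)) hne1 hne2 hnm hnp q hq
      constructor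
      · simp_rw [hcoef]; exact hm
      · have hS : (∑ i, ((stdE b - stdE g2) i : ℂ) *
              (RhR i (stdE a - stdE b) q - RhR i (-(stdE a - stdE b)) q))
            = ∑ i, ((stdE b - stdE d2) i : ℂ) *
              (RhR i (stdE a - stdE b) q - RhR i (-(stdE a - stdE b)) q) := by
          rw [← sub_eq_zero, ← Finset.sum_sub_distrib, ← hm]
          refine Finset.sum_congr rfl fun i _ => ?_
          rw [← sub_mul, ← Complex.ofReal_sub, hcoef i]
        have hc1 : cst (stdE a - stdE g2) (-(stdE b - stdE g2)) = 1 := by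
          rw [neg_sub, cst_eval (Ne.symm hsa) hsb]
          · simp [hab]
          · rw [show (stdE a - stdE g2) + (stdE g2 - stdE b) = (stdE a - stdE b : Fin n → ℝ)
              from by abel]
            exact mem_Phi hab
        have hc2 : cst (stdE a - stdE d2) (-(stdE b - stdE d2)) = 1 := by
          rw [neg_sub, cst_eval (Ne.symm hta) htb]
          · simp [hab]
          · rw [show (stdE a - stdE d2) + (stdE d2 - stdE b) = (stdE a - stdE b : Fin n → ℝ)
              from by abel]
            exact mem_Phi hab
        rw [hS, hc1, hc2]
    · -- case I-II : contradiction
      exfalso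
      obtain rfl := hgb.symm; obtain rfl := hba.symm; obtain rfl := hbs.symm
      obtain rfl := hda.symm; obtain rfl := hcr.symm; obtain rfl := hcb.symm
      refine notMem_Phi hab ?_ ?_ h4
      · simp [stdE, hab, Ne.symm hsa, Ne.symm hua]
      · simp [stdE, Ne.symm hab, Ne.symm hsb, Ne.symm hub]
  · rcases sum_decomp hab hd12 hc12 hc' with ⟨hdb, hca, hcs, hta, htb⟩ | ⟨hda, hcr, hcb, hua, hub⟩
    · -- case II-I : contradiction
      exfalso
      obtain rfl := hga.symm; obtain rfl := hbr.symm; obtain rfl := hbb.symm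
      obtain rfl := hdb.symm; obtain rfl := hca.symm; obtain rfl := hcs.symm
      have h4' : ((stdE b - stdE d2) - (stdE g1 - stdE a) : Fin n → ℝ) ∈ Phi n := by
        have := neg_mem_Phi h4; rwa [neg_sub] at this
      refine notMem_Phi hab ?_ ?_ h4'
      · simp [stdE, hab, Ne.symm hta, Ne.symm hra]
      · simp [stdE, Ne.symm hab, Ne.symm htb, Ne.symm hrb]
    · -- case II-II
      obtain rfl := hga.symm; obtain rfl := hbr.symm; obtain rfl := hbb.symm
      obtain rfl := hda.symm; obtain rfl := hcr.symm; obtain rfl := hcb.symm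
      have hgd : g1 ≠ d1 := fun hh => h3 (by rw [hh])
      have hne1 : (stdE g1 - stdE d1 : Fin n → ℝ) ≠ stdE a - stdE b :=
        fun hh => hra (root_eq hgd hab hh).1
      have hne2 : (stdE g1 - stdE d1 : Fin n → ℝ) ≠ -(stdE a - stdE b) := by
        rw [neg_sub]; exact fun hh => hrb (root_eq hgd hab.symm hh).1
      have hnm : (stdE a - stdE b - (stdE g1 - stdE d1) : Fin n → ℝ) ∉ Phi n := by
        apply notMem_Phi (Ne.symm hua)
        · simp [stdE, hab, Ne.symm hra, Ne.symm hua]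
        · simp [stdE, hua, hub, Ne.symm hgd]
      have hnp : (stdE a - stdE b + (stdE g1 - stdE d1) : Fin n → ℝ) ∉ Phi n := by
        apply notMem_Phi (Ne.symm hra)
        · simp [stdE, hab, Ne.symm hra, Ne.symm hua]
        · simp [stdE, hra, hrb, hgd]
      have hcoef : ∀ i, ((stdE g1 - stdE a) i - (stdE d1 - stdE a) i : ℝ)
          = (stdE g1 - stdE d1) i := by
        intro i; simp only [stdE_sub_apply]; ring
      intro q hq
      have hm := main _ (mem_Phi hgd) hne1 hne2 hnm hnp q hq
      constructor
      · simp_rw [hcoef]; exact hm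
      · have hS : (∑ i, ((stdE g1 - stdE a) i : ℂ) *
              (RhR i (stdE a - stdE b) q - RhR i (-(stdE a - stdE b)) q))
            = ∑ i, ((stdE d1 - stdE a) i : ℂ) *
              (RhR i (stdE a - stdE b) q - RhR i (-(stdE a - stdE b)) q) := by
          rw [← sub_eq_zero, ← Finset.sum_sub_distrib, ← hm]
          refine Finset.sum_congr rfl fun i _ => ?_
          rw [← sub_mul, ← Complex.ofReal_sub, hcoef i]
        have hc1 : cst (stdE g1 - stdE b) (-(stdE g1 - stdE a)) = -1 := by
          rw [neg_sub, cst_eval hrb (Ne.symm hra)]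
          · simp [Ne.symm hab]
          · rw [show (stdE g1 - stdE b) + (stdE a - stdE g1) = (stdE a - stdE b : Fin n → ℝ)
              from by abel]
            exact mem_Phi hab
        have hc2 : cst (stdE d1 - stdE b) (-(stdE d1 - stdE a)) = -1 := by
          rw [neg_sub, cst_eval hub (Ne.symm hua)]
          · simp [Ne.symm hab]
          · rw [show (stdE d1 - stdE b) + (stdE a - stdE d1) = (stdE a - stdE b : Fin n → ℝ)
              from by abel]
            exact mem_Phi hab
        rw [hS, hc1, hc2]

end
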